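/- For n ≥ 2, the star K_{1,n−1} on n vertices satisfies th_Z(K_{1,n−1}) = n, and th_⌊Z⌋(K_{1,n−1}) ≤ ⌈2√(n−1) − 1⌉ + 1. -/

import Mathlib

open SimpleGraph

namespace ZFT

variable {V : Type*} {α : Type*} {β : Type*}

/-! ### Standard zero forcing (simultaneous propagation) -/

/-- One round of simultaneous standard zero forcing: a blue vertex forces its
unique white neighbor. -/
def zStep (G : SimpleGraph V) (S : Set V) : Set V :=
  S ∪ {w | ∃ u ∈ S, G.Adj u w ∧ ∀ x, G.Adj u x → x ∉ S → x = w}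

/-- `B` is a standard zero forcing set of `G`. -/
def IsZeroForcingSet (G : SimpleGraph V) (B : Set V) : Prop :=
  ∃ t : ℕ, (zStep G)^[t] B = Set.univ

/-- The standard propagation time `pt_Z(G;B)` (`⊤` if `B` is not a zero forcing set). -/
noncomputable def ptZ (G : SimpleGraph V) (B : Set V) : ℕ∞ :=
  sInf {n : ℕ∞ | ∃ t : ℕ, n = t ∧ (zStep G)^[t] B = Set.univ}

/-- The standard throttling number `th_Z(G;B) = |B| + pt_Z(G;B)`. -/
noncomputable def thZ (G : SimpleGraph V) (B : Set V) : ℕ∞ :=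
  (B.ncard : ℕ∞) + ptZ G B

/-- The standard throttling number `th_Z(G)`. -/
noncomputable def thZgraph (G : SimpleGraph V) : ℕ∞ :=
  sInf {n : ℕ∞ | ∃ B : Set V, IsZeroForcingSet G B ∧ n = thZ G B}

/-- The standard zero forcing number `Z(G)`. -/
noncomputable def Znum (G : SimpleGraph V) : ℕ :=
  sInf {k : ℕ | ∃ B : Set V, IsZeroForcingSet G B ∧ B.ncard = k}

/-- The standard propagation time `pt_Z(G)`, minimized over minimum zero forcing sets. -/
noncomputable def ptZgraph (G : SimpleGraph V) : ℕ∞ :=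
  sInf {n : ℕ∞ | ∃ B : Set V, IsZeroForcingSet G B ∧ B.ncard = Znum G ∧ n = ptZ G B}

/-! ### Sets of standard forces -/

/-- Validity of a single standard force `u → w` when `blue` is the blue set. -/
def zForceValid (G : SimpleGraph V) (blue : Set V) (u w : V) : Prop :=
  u ∈ blue ∧ w ∉ blue ∧ G.Adj u w ∧ ∀ x, G.Adj u x → x ∉ blue → x = w

/-- Validity of a chronological list of standard forces starting from a blue set. -/
def zValidList (G : SimpleGraph V) : Set V → List (V × V) → Prop
  | _, [] => True
  | blue, p :: L => zForceValid G blue p.1 p.2 ∧ zValidList G (insert p.2 blue) L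

/-- The blue set after performing all forces in a list, starting from `B`. -/
def endBlue (B : Set V) (L : List (V × V)) : Set V :=
  B ∪ {w | ∃ u, (u, w) ∈ L}

/-- The set of vertices that have performed a force in a list. -/
def endForced (L : List (V × V)) : Set V := {u | ∃ w, (u, w) ∈ L}

/-- `F` is a set of standard forces of `B` in `G` (recorded from a maximal
chronological list of forces). -/
def IsZForceSet (G : SimpleGraph V) (B : Set V) (F : Set (V × V)) : Prop :=
  ∃ L : List (V × V), zValidList G B L ∧
    (∀ u w, ¬ zForceValid G (endBlue B L) u w) ∧ F = {p | p ∈ L}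

/-- The set of blue vertices at time `t` when the forces of `F` are performed at the
earliest possible time steps, starting from `B` blue. -/
def zBlueAt (G : SimpleGraph V) (F : Set (V × V)) (B : Set V) : ℕ → Set V
  | 0 => B
  | t + 1 =>
      zBlueAt G F B t ∪ {w | ∃ v, (v, w) ∈ F ∧ zForceValid G (zBlueAt G F B t) v w}

/-- The standard propagation time `pt_Z(G;F)` of a set of forces `F` of `B`. -/
noncomputable def ptZofF (G : SimpleGraph V) (F : Set (V × V)) (B : Set V) : ℕ∞ :=
  sInf {n : ℕ∞ | ∃ t : ℕ, n = t ∧ zBlueAt G F B t = Set.univ}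

/-! ### `⌊Z⌋` (minor monotone floor) forcing -/

/-- Validity of a single `⌊Z⌋` force `u → w`: `u` is blue and has not yet forced, `w`
is white, and either `w` is the unique white neighbor of `u`, or all neighbors of `u`
are blue (a hop). -/
def zfForceValid (G : SimpleGraph V) (blue forced : Set V) (u w : V) : Prop :=
  u ∈ blue ∧ w ∉ blue ∧ u ∉ forced ∧
    ((G.Adj u w ∧ ∀ x, G.Adj u x → x ∉ blue → x = w) ∨ ∀ x, G.Adj u x → x ∈ blue)

/-- Validity of a chronological list of `⌊Z⌋` forces. -/
def zfValidList (G : SimpleGraph V) : Set V → Set V → List (V × V) → Prop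
  | _, _, [] => True
  | blue, forced, p :: L =>
      zfForceValid G blue forced p.1 p.2 ∧
        zfValidList G (insert p.2 blue) (insert p.1 forced) L

/-- `F` is a set of `⌊Z⌋` forces of `B` in `G` (recorded from a maximal chronological
list of `⌊Z⌋` forces starting with `B` blue). -/
def IsZFForceSet (G : SimpleGraph V) (B : Set V) (F : Set (V × V)) : Prop :=
  ∃ L : List (V × V), zfValidList G B ∅ L ∧
    (∀ u w, ¬ zfForceValid G (endBlue B L) (endForced L) u w) ∧ F = {p | p ∈ L}

/-- The set of blue vertices at time `t` when the `⌊Z⌋` forces of `F` are performed at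
the earliest possible time steps, starting from `B` blue. -/
def zfBlueAt (G : SimpleGraph V) (F : Set (V × V)) (B : Set V) : ℕ → Set V
  | 0 => B
  | t + 1 =>
      zfBlueAt G F B t ∪
        {w | ∃ v, (v, w) ∈ F ∧ v ∈ zfBlueAt G F B t ∧ w ∉ zfBlueAt G F B t ∧
          (∀ w', (v, w') ∈ F → w' ∈ zfBlueAt G F B t → w' ∈ B) ∧
          ((G.Adj v w ∧ ∀ x, G.Adj v x → x ∉ zfBlueAt G F B t → x = w) ∨
            ∀ x, G.Adj v x → x ∈ zfBlueAt G F B t)}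

/-- The `⌊Z⌋` propagation time `pt_⌊Z⌋(G;F)` of a set of `⌊Z⌋` forces `F` of `B`. -/
noncomputable def ptZFofF (G : SimpleGraph V) (F : Set (V × V)) (B : Set V) : ℕ∞ :=
  sInf {n : ℕ∞ | ∃ t : ℕ, n = t ∧ zfBlueAt G F B t = Set.univ}

/-- The `⌊Z⌋` propagation time `pt_⌊Z⌋(G;B)`, minimized over sets of `⌊Z⌋` forces of `B`. -/
noncomputable def ptZF (G : SimpleGraph V) (B : Set V) : ℕ∞ :=
  sInf {n : ℕ∞ | ∃ F : Set (V × V), IsZFForceSet G B F ∧ n = ptZFofF G F B}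

/-- The `⌊Z⌋` throttling number `th_⌊Z⌋(G;B) = |B| + pt_⌊Z⌋(G;B)`. -/
noncomputable def thZF (G : SimpleGraph V) (B : Set V) : ℕ∞ :=
  (B.ncard : ℕ∞) + ptZF G B

/-- The `⌊Z⌋` throttling number `th_⌊Z⌋(G)`, minimized over all `B ⊆ V(G)`. -/
noncomputable def thZFgraph (G : SimpleGraph V) : ℕ∞ :=
  sInf {n : ℕ∞ | ∃ B : Set V, n = thZF G B}

/-- `B` is a `⌊Z⌋` forcing set of `G`. -/
def IsZFForcingSet (G : SimpleGraph V) (B : Set V) : Prop :=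
  ∃ F : Set (V × V), IsZFForceSet G B F ∧ B ∪ {w | ∃ u, (u, w) ∈ F} = Set.univ

/-- The `⌊Z⌋` forcing number `⌊Z⌋(G)`. -/
noncomputable def ZFnum (G : SimpleGraph V) : ℕ :=
  sInf {k : ℕ | ∃ B : Set V, IsZFForcingSet G B ∧ B.ncard = k}

/-- The `⌊Z⌋` propagation time `pt_⌊Z⌋(G)`, minimized over minimum `⌊Z⌋` forcing sets. -/
noncomputable def ptZFgraph (G : SimpleGraph V) : ℕ∞ :=
  sInf {n : ℕ∞ | ∃ B : Set V, IsZFForcingSet G B ∧ B.ncard = ZFnum G ∧ n = ptZF G B}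

/-! ### Contractions, minors, and products -/

/-- The graph obtained from `H` by contracting (all) the edges in `C`: its vertices are
the connected components of the spanning subgraph of `H` with edge set `C ∩ E(H)`, and
two distinct components are adjacent iff `H` has an edge between them. -/
def contractEdges (H : SimpleGraph α) (C : Set (Sym2 α)) :
    SimpleGraph (SimpleGraph.fromEdgeSet C ⊓ H).ConnectedComponent where
  Adj c d := c ≠ d ∧ ∃ a b, H.Adj a b ∧
      (SimpleGraph.fromEdgeSet C ⊓ H).connectedComponentMk a = c ∧
      (SimpleGraph.fromEdgeSet C ⊓ H).connectedComponentMk b = d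
  symm := by
    refine ⟨?_⟩
    rintro c d ⟨hcd, a, b, hab, ha, hb⟩
    exact ⟨hcd.symm, b, a, hab.symm, hb, ha⟩
  loopless := ⟨fun c h => h.1 rfl⟩

/-- `G` is a minor of `H`: `G` is isomorphic to a subgraph of a graph obtained from an
induced subgraph of `H` by contracting a set of edges. -/
def IsMinor (G : SimpleGraph β) (H : SimpleGraph α) : Prop :=
  ∃ (s : Set α) (C : Set (Sym2 s))
    (G'' : SimpleGraph (SimpleGraph.fromEdgeSet C ⊓ H.induce s).ConnectedComponent),
      G'' ≤ contractEdges (H.induce s) C ∧ Nonempty (G ≃g G'')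

/-- The Cartesian product `K_a □ P_{b+1}`. -/
def prodKP (a b : ℕ) : SimpleGraph (Fin a × Fin (b + 1)) :=
  (⊤ : SimpleGraph (Fin a)) □ SimpleGraph.pathGraph (b + 1)

/-- The path edges of `K_a □ P_{b+1}` (edges within the copies of `P_{b+1}`). -/
def pathEdges (a b : ℕ) : Set (Sym2 (Fin a × Fin (b + 1))) :=
  {e | ∃ (i : Fin a) (j j' : Fin (b + 1)),
    (SimpleGraph.pathGraph (b + 1)).Adj j j' ∧ e = s((i, j), (i, j'))}

/-- The complete edges of `K_a □ P_{b+1}` (edges within the copies of `K_a`). -/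
def completeEdges (a b : ℕ) : Set (Sym2 (Fin a × Fin (b + 1))) :=
  {e | ∃ (i i' : Fin a) (j : Fin (b + 1)), i ≠ i' ∧ e = s((i, j), (i', j))}

/-- The star `K_{1,n-1}` on `n` vertices: vertex `0` is adjacent to all others. -/
def starGraph (n : ℕ) : SimpleGraph (Fin n) where
  Adj i j := i ≠ j ∧ ((i : ℕ) = 0 ∨ (j : ℕ) = 0)
  symm := by refine ⟨?_⟩; rintro i j ⟨h1, h2⟩; exact ⟨h1.symm, h2.symm⟩
  loopless := ⟨fun i h => h.1 rfl⟩

/-- The independence number `α(G)`. -/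
noncomputable def indepNum (G : SimpleGraph V) : ℕ :=
  sSup {k : ℕ | ∃ s : Set V, (∀ a ∈ s, ∀ b ∈ s, a ≠ b → ¬ G.Adj a b) ∧ s.ncard = k}

/-!
In a star each round of standard forcing colors at most one new vertex, so `|B| + pt_Z(G;B) ≥ n`,
with equality for `B = V`. For `⌊Z⌋` forcing on the star with `N` leaves, start with the center
and `a` leaves blue: a blue leaf has only blue neighbours, so each blue leaf that has not forced yet
hops to a white leaf, `a` new leaves turn blue per round, and `N ≤ a c` leaves are blue after
`c - 1` rounds. Hence `th_⌊Z⌋ ≤ a + c`, and `a, c ∈ {⌊√N⌋, ⌊√N⌋ + 1}` achieve `a + c - 1 < 2√N`.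
-/

lemma apply_iterate_le_add {β : Type*} (μ : β → ℕ) (g : β → β) (hg : ∀ x, μ (g x) ≤ μ x + 1)
    (x : β) (t : ℕ) : μ (g^[t] x) ≤ μ x + t := by
  induction t with
  | zero => simp
  | succ t ih =>
    rw [Function.iterate_succ_apply']
    linarith [hg (g^[t] x)]

lemma IsZeroForcingSet.exists_ptZ_eq {G : SimpleGraph V} {B : Set V} (hB : IsZeroForcingSet G B) :
    ∃ t : ℕ, ptZ G B = t ∧ (zStep G)^[t] B = Set.univ := by
  obtain ⟨t, ht⟩ := hB
  exact csInf_mem (s := {n : ℕ∞ | ∃ t : ℕ, n = t ∧ (zStep G)^[t] B = Set.univ}) ⟨t, t, rfl, ht⟩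

lemma thZgraph_le_card [Finite V] (G : SimpleGraph V) : thZgraph G ≤ Nat.card V := by
  have hpt : ptZ G Set.univ = 0 := nonpos_iff_eq_zero.mp (sInf_le ⟨0, rfl, rfl⟩)
  exact sInf_le ⟨Set.univ, ⟨0, rfl⟩, by rw [thZ, hpt, add_zero, Set.ncard_univ]⟩

lemma card_le_thZgraph [Finite V] {G : SimpleGraph V}
    (hG : ∀ S, (zStep G S).ncard ≤ S.ncard + 1) : Nat.card V ≤ thZgraph G := by
  refine le_sInf ?_
  rintro _ ⟨B, hB, rfl⟩
  obtain ⟨t, hpt, ht⟩ := IsZeroForcingSet.exists_ptZ_eq hB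
  have hcard := apply_iterate_le_add Set.ncard (zStep G) hG B t
  rw [ht, Set.ncard_univ] at hcard
  rw [thZ, hpt]
  exact_mod_cast hcard

lemma starGraph_adj_leaf {n : ℕ} {u x : Fin n} (h : (starGraph n).Adj u x) (hu : (u : ℕ) ≠ 0) :
    (x : ℕ) = 0 :=
  h.2.resolve_left hu

/-- A leaf can only force the center, which is then white and cannot force; the center can only
force its unique white neighbour. -/
lemma ncard_zStep_starGraph_le {n : ℕ} (S : Set (Fin n)) :
    (zStep (starGraph n) S).ncard ≤ S.ncard + 1 := by
  set T := {w | ∃ u ∈ S, (starGraph n).Adj u w ∧ ∀ x, (starGraph n).Adj u x → x ∉ S → x = w}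
  have hT : (T \ S).ncard ≤ 1 := by
    rw [Set.ncard_le_one (Set.toFinite _)]
    rintro w₁ ⟨⟨u₁, hu₁, hadj₁, huniq₁⟩, hw₁⟩ w₂ ⟨⟨u₂, hu₂, hadj₂, -⟩, hw₂⟩
    rcases hadj₁.2 with h₁ | h₁ <;> rcases hadj₂.2 with h₂ | h₂
    · obtain rfl : u₂ = u₁ := Fin.ext (by omega)
      exact (huniq₁ w₂ hadj₂ hw₂).symm
    · exact absurd (show w₂ = u₁ from Fin.ext (by omega)) (fun h => hw₂ (h ▸ hu₁))
    · exact absurd (show w₁ = u₂ from Fin.ext (by omega)) (fun h => hw₁ (h ▸ hu₂))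
    · exact Fin.ext (by omega)
  calc (zStep (starGraph n) S).ncard = (S ∪ (T \ S)).ncard := by
        rw [Set.union_sdiff_self]; rfl
    _ ≤ S.ncard + (T \ S).ncard := Set.ncard_union_le _ _
    _ ≤ S.ncard + 1 := by omega

theorem thZgraph_starGraph (n : ℕ) : thZgraph (starGraph n) = n := by
  apply le_antisymm
  · simpa using thZgraph_le_card (starGraph n)
  · simpa using card_le_thZgraph ncard_zStep_starGraph_le

lemma zfBlueAt_subset (G : SimpleGraph V) (F : Set (V × V)) (B : Set V) (t : ℕ) :
    zfBlueAt G F B t ⊆ B ∪ {w | ∃ u, (u, w) ∈ F} := by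
  induction t with
  | zero => exact Set.subset_union_left
  | succ t ih =>
    rintro w (hw | ⟨u, hu, -⟩)
    · exact ih hw
    · exact Or.inr ⟨u, hu⟩

/-- A valid list of `⌊Z⌋` forces that turns every vertex blue is automatically maximal. -/
lemma thZFgraph_le_of_zfValidList {G : SimpleGraph V} {B : Set V} {L : List (V × V)}
    (hL : zfValidList G B ∅ L) {t : ℕ} (ht : zfBlueAt G {p | p ∈ L} B t = Set.univ) :
    thZFgraph G ≤ B.ncard + t := by
  have hend : endBlue B L = Set.univ :=
    Set.eq_univ_of_univ_subset (ht ▸ zfBlueAt_subset G _ B t)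
  have hF : IsZFForceSet G B {p | p ∈ L} :=
    ⟨L, hL, fun u w h => h.2.1 (hend ▸ Set.mem_univ w), rfl⟩
  calc thZFgraph G ≤ thZF G B := sInf_le ⟨B, rfl⟩
    _ ≤ B.ncard + t := by
      have hpt : ptZF G B ≤ ptZFofF G {p | p ∈ L} B := sInf_le ⟨_, hF, rfl⟩
      rw [thZF]
      gcongr
      exact hpt.trans (sInf_le ⟨t, rfl, ht⟩)

def starHop (N a i : ℕ) : Fin (N + 1) × Fin (N + 1) :=
  (Fin.ofNat (N + 1) i, Fin.ofNat (N + 1) (i + a))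

/-- The leaves `1, …, N - a` hop, in this order, to the leaves `a + 1, …, N`. -/
def starHops (N a : ℕ) : List (Fin (N + 1) × Fin (N + 1)) :=
  (List.range' 1 (N - a)).map (starHop N a)

lemma mem_starHops {N a : ℕ} {u w : Fin (N + 1)} :
    (u, w) ∈ starHops N a ↔ 1 ≤ (u : ℕ) ∧ (w : ℕ) = u + a := by
  simp only [starHops, starHop, List.mem_map, List.mem_range', Prod.mk.injEq]
  constructor
  · rintro ⟨i, ⟨j, hj, rfl⟩, rfl, rfl⟩
    simp only [Fin.val_ofNat]
    rw [Nat.mod_eq_of_lt (by omega), Nat.mod_eq_of_lt (by omega)]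
    omega
  · rintro ⟨hu, hw⟩
    refine ⟨u, ⟨u - 1, by omega, by omega⟩, Fin.ofNat_val_eq_self u, Fin.ext ?_⟩
    rw [Fin.val_ofNat, Nat.mod_eq_of_lt (by omega), hw]

lemma zfValidList_starHops {N a : ℕ} (ha : 1 ≤ a) (k d : ℕ) (hkd : k + d ≤ N - a) :
    zfValidList (starGraph (N + 1)) {v : Fin (N + 1) | (v : ℕ) ≤ a + k}
      {v : Fin (N + 1) | 1 ≤ (v : ℕ) ∧ (v : ℕ) ≤ k}
      ((List.range' (k + 1) d).map (starHop N a)) := by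
  induction d generalizing k with
  | zero => trivial
  | succ d ih =>
    have hu : ((starHop N a (k + 1)).1 : ℕ) = k + 1 := Nat.mod_eq_of_lt (by omega)
    have hw : ((starHop N a (k + 1)).2 : ℕ) = k + 1 + a := Nat.mod_eq_of_lt (by omega)
    rw [List.range'_succ, List.map_cons]
    refine ⟨⟨?_, ?_, ?_, Or.inr fun x hx => ?_⟩, ?_⟩
    · show ((starHop N a (k + 1)).1 : ℕ) ≤ a + k
      omega
    · show ¬ ((starHop N a (k + 1)).2 : ℕ) ≤ a + k
      omega
    · show ¬ (1 ≤ ((starHop N a (k + 1)).1 : ℕ) ∧ ((starHop N a (k + 1)).1 : ℕ) ≤ k)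
      omega
    · show (x : ℕ) ≤ a + k
      have := starGraph_adj_leaf hx (by omega)
      omega
    · have hblue : insert (starHop N a (k + 1)).2 {v : Fin (N + 1) | (v : ℕ) ≤ a + k} =
          {v : Fin (N + 1) | (v : ℕ) ≤ a + (k + 1)} := by
        ext v
        simp only [Set.mem_insert_iff, Set.mem_ofPred_eq, Fin.ext_iff, hw]
        omega
      have hforced : insert (starHop N a (k + 1)).1
          {v : Fin (N + 1) | 1 ≤ (v : ℕ) ∧ (v : ℕ) ≤ k} =
          {v : Fin (N + 1) | 1 ≤ (v : ℕ) ∧ (v : ℕ) ≤ k + 1} := by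
        ext v
        simp only [Set.mem_insert_iff, Set.mem_ofPred_eq, Fin.ext_iff, hu]
        omega
      rw [hblue, hforced]
      exact ih (k + 1) (by omega)

lemma zfBlueAt_starHops {N a : ℕ} (ha : 1 ≤ a) (m : ℕ) :
    zfBlueAt (starGraph (N + 1)) {p | p ∈ starHops N a} {v : Fin (N + 1) | (v : ℕ) ≤ a} m =
      {v : Fin (N + 1) | (v : ℕ) ≤ a * (m + 1)} := by
  induction m with
  | zero => simp [zfBlueAt]
  | succ m ih =>
    simp only [zfBlueAt, ih]
    ext w
    simp only [Set.mem_union, Set.mem_ofPred_eq]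
    constructor
    · rintro (hw | ⟨u, huw, hu, -, -, -⟩)
      · nlinarith
      · rw [(mem_starHops.mp huw).2]
        nlinarith
    · intro hw
      by_cases hold : (w : ℕ) ≤ a * (m + 1)
      · exact Or.inl hold
      right
      have ha_le : a ≤ a * (m + 1) := Nat.le_mul_of_pos_right a (by omega)
      set u : Fin (N + 1) := ⟨w - a, by omega⟩
      have huw : (u, w) ∈ starHops N a :=
        mem_starHops.mpr ⟨show 1 ≤ (w : ℕ) - a by omega, show (w : ℕ) = w - a + a by omega⟩
      refine ⟨u, huw, ?_, hold, fun w' huw' hw' => ?_, Or.inr fun x hx => ?_⟩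
      · show w - a ≤ a * (m + 1)
        rw [Nat.mul_succ] at hw
        omega
      · have : w' = w := Fin.ext (by rw [(mem_starHops.mp huw').2, (mem_starHops.mp huw).2])
        exact absurd (this ▸ hw') hold
      · have := starGraph_adj_leaf hx (show (w : ℕ) - a ≠ 0 by omega)
        show (x : ℕ) ≤ a * (m + 1)
        omega

lemma ncard_setOf_val_le {N : ℕ} (a : ℕ) : {v : Fin (N + 1) | (v : ℕ) ≤ a}.ncard ≤ a + 1 := by
  calc {v : Fin (N + 1) | (v : ℕ) ≤ a}.ncard ≤ (Set.Iic a).ncard :=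
        Set.ncard_le_ncard_of_injOn Fin.val (fun v hv => hv) Fin.val_injective.injOn
    _ = a + 1 := by rw [← Finset.coe_Iic, Set.ncard_coe_finset, Nat.card_Iic]

theorem thZFgraph_starGraph_le {N a c : ℕ} (ha : 1 ≤ a) (hc : 1 ≤ c) (hN : N ≤ a * c) :
    thZFgraph (starGraph (N + 1)) ≤ (a + c : ℕ) := by
  have hL : zfValidList (starGraph (N + 1)) {v : Fin (N + 1) | (v : ℕ) ≤ a} ∅ (starHops N a) := by
    have h := zfValidList_starHops (N := N) ha 0 (N - a) (by omega)
    have hforced : {v : Fin (N + 1) | 1 ≤ (v : ℕ) ∧ (v : ℕ) ≤ 0} = ∅ := by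
      ext v; simp only [Set.mem_ofPred_eq, Set.mem_empty_iff_false, iff_false]; omega
    rwa [hforced] at h
  have ht : zfBlueAt (starGraph (N + 1)) {p | p ∈ starHops N a}
      {v : Fin (N + 1) | (v : ℕ) ≤ a} (c - 1) = Set.univ := by
    rw [zfBlueAt_starHops ha, Nat.sub_add_cancel hc]
    exact Set.eq_univ_of_forall fun v => le_trans (Nat.lt_succ_iff.mp v.isLt) hN
  calc thZFgraph (starGraph (N + 1)) ≤ _ := thZFgraph_le_of_zfValidList hL ht
    _ ≤ (a + c : ℕ) := by
      have := ncard_setOf_val_le (N := N) a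
      exact_mod_cast (by omega : _ + (c - 1) ≤ a + c)

/-- With `k = ⌊√N⌋`, one of `k × k`, `(k + 1) × k`, `(k + 1) × (k + 1)` works. -/
lemma exists_le_mul_sq_lt (N : ℕ) (hN : 1 ≤ N) :
    ∃ a c : ℕ, 1 ≤ a ∧ 1 ≤ c ∧ N ≤ a * c ∧ ((a : ℤ) + c - 1) ^ 2 < 4 * N := by
  set k := N.sqrt
  have hle : k * k ≤ N := Nat.sqrt_le N
  have hlt : N < (k + 1) * (k + 1) := Nat.lt_succ_sqrt N
  have hk : 1 ≤ k := Nat.le_sqrt.mpr hN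
  rcases hle.eq_or_lt with heq | hgt
  · exact ⟨k, k, hk, hk, heq.ge, by rw [← heq]; push_cast; nlinarith⟩
  by_cases hsmall : N ≤ (k + 1) * k
  · exact ⟨k + 1, k, by omega, hk, hsmall, by push_cast; nlinarith⟩
  · exact ⟨k + 1, k + 1, by omega, by omega, hlt.le, by push_cast; nlinarith⟩

lemma exists_le_mul_add_le_ceil_two_sqrt (N : ℕ) (hN : 1 ≤ N) :
    ∃ a c : ℕ, 1 ≤ a ∧ 1 ≤ c ∧ N ≤ a * c ∧ a + c ≤ (⌈2 * √(N : ℝ) - 1⌉).toNat + 1 := by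
  obtain ⟨a, c, ha, hc, hN, hsq⟩ := exists_le_mul_sq_lt N hN
  have hlt : (a : ℝ) + c - 1 < 2 * √(N : ℝ) := by
    refine lt_of_pow_lt_pow_left₀ 2 (by positivity) ?_
    rw [mul_pow, Real.sq_sqrt (Nat.cast_nonneg N)]
    exact_mod_cast hsq
  have hceil : (a : ℤ) + c - 1 ≤ ⌈2 * √(N : ℝ) - 1⌉ :=
    Int.le_ceil_iff.mpr (by push_cast; linarith)
  exact ⟨a, c, ha, hc, hN, by omega⟩

/-- for `n ≥ 2`, `th_Z(K_{1,n−1}) = n` and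
`th_⌊Z⌋(K_{1,n−1}) ≤ ⌈2√(n−1) − 1⌉ + 1`. -/
theorem stmt19 (n : ℕ) (hn : 2 ≤ n) :
    thZgraph (starGraph n) = (n : ℕ∞) ∧
      thZFgraph (starGraph n) ≤
        ((⌈2 * Real.sqrt ((n : ℝ) - 1) - 1⌉).toNat : ℕ∞) + 1 := by
  refine ⟨thZgraph_starGraph n, ?_⟩
  obtain ⟨N, rfl⟩ : ∃ N, n = N + 1 := ⟨n - 1, by omega⟩
  obtain ⟨a, c, ha, hc, hN, hac⟩ := exists_le_mul_add_le_ceil_two_sqrt N (by omega)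
  have hleaves : ((N + 1 : ℕ) : ℝ) - 1 = N := by push_cast; ring
  rw [hleaves]
  calc thZFgraph (starGraph (N + 1)) ≤ (a + c : ℕ) := thZFgraph_starGraph_le ha hc hN
    _ ≤ _ := by exact_mod_cast hac

end ZFT
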